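/- arXiv:1107.0310 — 5 statements merged into one kernel-verified Lean document; each statement's English description precedes it below -/
import Mathlib

section
/- Let G be a finite group and u an automorphism of G. Define an action of G on itself by y ⇀ x = y · x · u(y⁻¹). Then each orbit of this action (a u-twisted conjugacy class) is a rack under the operation y ▷ z = y · u(z · y⁻¹); that is, this operation is left self-distributive and each left translation is bijective, and each orbit is closed under the operation. -/
/-! Write `τ_g x = g x u(g)⁻¹` for the twisted conjugation action and `y ▷ z = y u(z y⁻¹)`.
Since `y ▷ z = τ_{y z⁻¹} z`, the operation never leaves the orbit of its right argument.
A left translation of `▷` composes a right multiplication, `u` and a left multiplication, so it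
is bijective; self-distributivity is a direct computation. -/

namespace TwistedConj

variable {G : Type*} [Group G] (u : G ≃* G)

def twistedConj (g x : G) : G := g * x * u g⁻¹

def rackOp (y z : G) : G := y * u (z * y⁻¹)

theorem twistedConj_mul (a b x : G) :
    twistedConj u (a * b) x = twistedConj u a (twistedConj u b x) := by
  simp only [twistedConj, mul_inv_rev, map_mul, mul_assoc]

theorem rackOp_eq_twistedConj (y z : G) : rackOp u y z = twistedConj u (y * z⁻¹) z := by
  simp only [rackOp, twistedConj, mul_inv_rev, inv_inv, map_mul, mul_assoc, inv_mul_cancel_left]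

theorem rackOp_mem_orbit {x z : G} (y : G) (hz : ∃ g, z = twistedConj u g x) :
    ∃ g, rackOp u y z = twistedConj u g x := by
  obtain ⟨h, rfl⟩ := hz
  exact ⟨y * (twistedConj u h x)⁻¹ * h, by rw [rackOp_eq_twistedConj, ← twistedConj_mul]⟩

theorem rackOp_bijective (y : G) : Function.Bijective (rackOp u y) :=
  ((Equiv.mulLeft y).bijective.comp u.bijective).comp (Equiv.mulRight y⁻¹).bijective

theorem rackOp_self_distrib (x y z : G) :
    rackOp u x (rackOp u y z) = rackOp u (rackOp u x y) (rackOp u x z) := by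
  simp [rackOp, map_mul, mul_assoc]

end TwistedConj

theorem twisted_conj_class_is_rack_general (G : Type*) [Group G]
    (u : G ≃* G) :
    (∀ x y z : G,
      x * u ((y * u (z * y⁻¹)) * x⁻¹) =
        (x * u (y * x⁻¹)) * u ((x * u (z * x⁻¹)) * (x * u (y * x⁻¹))⁻¹)) ∧
    (∀ x : G, Function.Bijective (fun z : G => x * u (z * x⁻¹))) ∧
    (∀ x y z : G, (∃ g : G, y = g * x * u g⁻¹) → (∃ g : G, z = g * x * u g⁻¹) →
      ∃ g : G, y * u (z * y⁻¹) = g * x * u g⁻¹) :=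
  ⟨TwistedConj.rackOp_self_distrib u, TwistedConj.rackOp_bijective u,
    fun _ y _ _ hz => TwistedConj.rackOp_mem_orbit u y hz⟩

/-- For a finite group `G` and `u ∈ Aut G`, each `u`-twisted conjugacy class
(orbit of the action `y ⇀ x = y x u(y⁻¹)`) is a rack under
`y ▷ z = y u(z y⁻¹)`: the operation is left self-distributive, every left
translation is bijective, and each orbit is closed under the operation. -/
theorem twisted_conj_class_is_rack (G : Type*) [Group G] [Fintype G]
    (u : G ≃* G) :
    (∀ x y z : G,
      x * u ((y * u (z * y⁻¹)) * x⁻¹) =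
        (x * u (y * x⁻¹)) * u ((x * u (z * x⁻¹)) * (x * u (y * x⁻¹))⁻¹)) ∧
    (∀ x : G, Function.Bijective (fun z : G => x * u (z * x⁻¹))) ∧
    (∀ x y z : G, (∃ g : G, y = g * x * u g⁻¹) → (∃ g : G, z = g * x * u g⁻¹) →
      ∃ g : G, y * u (z * y⁻¹) = g * x * u g⁻¹) :=
  twisted_conj_class_is_rack_general G u
end

section
/- Let G be a group, O a conjugacy class of G, and H a subgroup of G. Suppose O₁ and O₂ are two conjugacy classes of H both contained in O, and there exist r ∈ O₁ and s ∈ O₂ such that (rs)² does not commute with r. Then O is of type D: there exist elements r, s ∈ O with (rs)² ≠ (sr)² that are not conjugate in the subgroup ⟨r, s⟩ generated by them. -/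
/-! Take the representatives `r`, `s` themselves. Since `(sr)²` is the conjugate of `(rs)²` by `r`,
`(rs)² = (sr)²` would make `(rs)²` commute with `r`. An element of `⟨r, s⟩ ≤ H` conjugating `r`
to `s` would make the `H`-classes `O₁` and `O₂` equal. -/

/-- A subset `O` of a group is of type D if it contains `r`, `s` with
`(rs)² ≠ (sr)²` that are not conjugate in the subgroup `⟨r, s⟩`. -/
def IsTypeD {G : Type*} [Group G] (O : Set G) : Prop :=
  ∃ r ∈ O, ∃ s ∈ O, (r * s) ^ 2 ≠ (s * r) ^ 2 ∧
    ∀ h ∈ Subgroup.closure ({r, s} : Set G), h * r * h⁻¹ ≠ s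

section

variable {G : Type*} [Group G]

theorem mul_pow_swap_eq_conj (r s : G) (n : ℕ) : (s * r) ^ n = r⁻¹ * (r * s) ^ n * r := by
  calc (s * r) ^ n = (r⁻¹ * (r * s) * r⁻¹⁻¹) ^ n := by group
    _ = r⁻¹ * (r * s) ^ n * r := by rw [conj_pow, inv_inv]

theorem mul_pow_eq_mul_pow_swap_iff_commute (r s : G) (n : ℕ) :
    (r * s) ^ n = (s * r) ^ n ↔ Commute ((r * s) ^ n) r := by
  rw [mul_pow_swap_eq_conj r s n, eq_comm, mul_assoc, inv_mul_eq_iff_eq_mul]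
  exact Iff.rfl

theorem Subgroup.conj_set_subset_of_conj {H : Subgroup G} {r s h : G} (hh : h ∈ H)
    (hrs : h * r * h⁻¹ = s) :
    {x : G | ∃ k ∈ H, k * s * k⁻¹ = x} ⊆ {x : G | ∃ k ∈ H, k * r * k⁻¹ = x} := by
  rintro _ ⟨k, hk, rfl⟩
  exact ⟨k * h, H.mul_mem hk hh, by rw [← hrs]; group⟩

theorem Subgroup.conj_set_eq_of_conj {H : Subgroup G} {r s h : G} (hh : h ∈ H)
    (hrs : h * r * h⁻¹ = s) :
    {x : G | ∃ k ∈ H, k * r * k⁻¹ = x} = {x : G | ∃ k ∈ H, k * s * k⁻¹ = x} :=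
  (conj_set_subset_of_conj (H.inv_mem hh) (by rw [← hrs]; group)).antisymm
    (conj_set_subset_of_conj hh hrs)

theorem Subgroup.self_mem_conj_set (H : Subgroup G) (r : G) :
    r ∈ {x : G | ∃ k ∈ H, k * r * k⁻¹ = x} :=
  ⟨1, H.one_mem, by group⟩

end

theorem typeD_of_two_subgroup_classes_general {G : Type*} [Group G]
    (O : Set G)
    (H : Subgroup G) (O₁ O₂ : Set G) (r s : G)
    (hrH : r ∈ H) (hsH : s ∈ H)
    (hO₁ : O₁ = {x : G | ∃ h ∈ H, h * r * h⁻¹ = x})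
    (hO₂ : O₂ = {x : G | ∃ h ∈ H, h * s * h⁻¹ = x})
    (hO₁O : O₁ ⊆ O) (hO₂O : O₂ ⊆ O) (hne : O₁ ≠ O₂)
    (hcomm : ¬ Commute ((r * s) ^ 2) r) :
    IsTypeD O := by
  subst hO₁ hO₂
  have hclosure : Subgroup.closure ({r, s} : Set G) ≤ H :=
    (Subgroup.closure_le H).mpr (Set.insert_subset hrH (Set.singleton_subset_iff.mpr hsH))
  refine ⟨r, hO₁O (H.self_mem_conj_set r), s, hO₂O (H.self_mem_conj_set s), ?_, ?_⟩
  · exact fun heq => hcomm ((mul_pow_eq_mul_pow_swap_iff_commute r s 2).mp heq)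
  · exact fun h hh hrs => hne (Subgroup.conj_set_eq_of_conj (hclosure hh) hrs)

/-- If a conjugacy class `O` of `G` contains two distinct conjugacy classes
`O₁`, `O₂` of a subgroup `H`, with representatives `r ∈ O₁`, `s ∈ O₂` such
that `(rs)²` does not commute with `r`, then `O` is of type D. -/
theorem typeD_of_two_subgroup_classes {G : Type*} [Group G]
    (O : Set G) (g : G) (hO : O = {x : G | IsConj g x})
    (H : Subgroup G) (O₁ O₂ : Set G) (r s : G)
    (hrH : r ∈ H) (hsH : s ∈ H)
    (hO₁ : O₁ = {x : G | ∃ h ∈ H, h * r * h⁻¹ = x})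
    (hO₂ : O₂ = {x : G | ∃ h ∈ H, h * s * h⁻¹ = x})
    (hO₁O : O₁ ⊆ O) (hO₂O : O₂ ⊆ O) (hne : O₁ ≠ O₂)
    (hcomm : ¬ Commute ((r * s) ^ 2) r) :
    IsTypeD O :=
  typeD_of_two_subgroup_classes_general O H O₁ O₂ r s hrH hsH hO₁ hO₂ hO₁O hO₂O hne hcomm
end

section
/- Let G be a finite group, g ∈ G, and let 𝔐_g be the set of maximal (proper) subgroups M of G with g^G ∩ M ≠ ∅. Assume that for every M ∈ 𝔐_g there exists m ∈ M with g^G ∩ M ⊆ m^M ⊆ g^G. If the conjugacy class g^G is of type D, then there exist N ∈ 𝔐_g and n ∈ N such that the conjugacy class n^N is of type D. -/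
/-!
Take `r, s ∈ g^G` witnessing type D. Being conjugate in `G` but not in `⟨r, s⟩`, they generate a
proper subgroup, which lies in some maximal subgroup `N`; so `N` meets `g^G`. By hypothesis
`g^G ∩ N` lies in a single class `m^N`, so `r, s ∈ m^N`, and they still witness type D there:
`(rs)² ≠ (sr)²` is the same statement in `N` as in `G`, and `⟨r, s⟩` is the same subgroup whether generated
in `N` or in `G`.
-/

open Subgroup

section TypeD

variable {G : Type*} [Group G]

def IsTypeDPair (r s : G) : Prop :=
  (r * s) ^ 2 ≠ (s * r) ^ 2 ∧ ∀ h ∈ closure ({r, s} : Set G), h * r * h⁻¹ ≠ s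

theorem isTypeD_iff_exists_isTypeDPair (O : Set G) :
    IsTypeD O ↔ ∃ r ∈ O, ∃ s ∈ O, IsTypeDPair r s :=
  Iff.rfl

theorem IsTypeDPair.closure_ne_top {r s : G} (hD : IsTypeDPair r s) (hrs : IsConj r s) :
    closure ({r, s} : Set G) ≠ ⊤ := by
  intro htop
  obtain ⟨c, hc⟩ := isConj_iff.mp hrs
  exact hD.2 c (htop ▸ mem_top c) hc

theorem IsTypeDPair.of_coe {N : Subgroup G} {r s : N} (hD : IsTypeDPair (r : G) (s : G)) :
    IsTypeDPair r s := by
  refine ⟨fun hsq => hD.1 (by simpa using congrArg N.subtype hsq), fun h hh hconj => ?_⟩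
  have hle : closure ({r, s} : Set N) ≤
      (closure ({(r : G), (s : G)} : Set G)).comap N.subtype := by
    rw [closure_le]
    rintro x (rfl | rfl) <;> exact subset_closure (by simp)
  exact hD.2 h (hle hh) (by simpa using congrArg N.subtype hconj)

end TypeD

/-- Breuer's lemma: let `G` be a finite group and `g ∈ G`. Suppose that for
every maximal subgroup `M` meeting the class `g^G` there is `m ∈ M` with
`g^G ∩ M ⊆ m^M ⊆ g^G`. If `g^G` is of type D, then some maximal subgroup `N`
meeting `g^G` has a conjugacy class `n^N` of type D. -/
theorem breuer_lemma {G : Type*} [Group G] [Finite G] (g : G)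
    (hyp : ∀ M : Subgroup G, IsCoatom M →
      ({x : G | IsConj g x} ∩ (M : Set G)).Nonempty →
      ∃ m : M, {x : G | IsConj g x} ∩ (M : Set G) ⊆
          Subtype.val '' {x : M | IsConj m x} ∧
        Subtype.val '' {x : M | IsConj m x} ⊆ {x : G | IsConj g x})
    (hD : IsTypeD {x : G | IsConj g x}) :
    ∃ N : Subgroup G, IsCoatom N ∧
      ({x : G | IsConj g x} ∩ (N : Set G)).Nonempty ∧
      ∃ n : N, IsTypeD {x : N | IsConj n x} := by
  obtain ⟨r, hr, s, hs, hrs⟩ := (isTypeD_iff_exists_isTypeDPair _).mp hD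
  have hne_top := hrs.closure_ne_top (hr.symm.trans hs)
  obtain ⟨N, hN, hle⟩ := (eq_top_or_exists_le_coatom _).resolve_left hne_top
  have hrN : r ∈ N := hle (subset_closure (by simp))
  have hsN : s ∈ N := hle (subset_closure (by simp))
  have hmeet : ({x : G | IsConj g x} ∩ (N : Set G)).Nonempty := ⟨r, hr, hrN⟩
  obtain ⟨m, hclass, -⟩ := hyp N hN hmeet
  obtain ⟨r', hr', rfl⟩ := hclass ⟨hr, hrN⟩
  obtain ⟨s', hs', rfl⟩ := hclass ⟨hs, hsN⟩
  exact ⟨N, hN, hmeet, m, r', hr', s', hs', hrs.of_coe⟩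
end

section
/- Let Z and X be finite racks and p : Z → X a surjective rack morphism. If X is of type D, then Z is of type D. -/
open Quandles

/-- A subrack of a rack: a nonempty subset closed under the action and the
inverse action. -/
def IsSubrack {X : Type*} [Rack X] (Y : Set X) : Prop :=
  Y.Nonempty ∧ (∀ a ∈ Y, ∀ b ∈ Y, a ◃ b ∈ Y) ∧ (∀ a ∈ Y, ∀ b ∈ Y, a ◃⁻¹ b ∈ Y)

/-- A rack `X` is of type D if it contains a decomposable subrack `R ⊔ S`
with `r ◃ (s ◃ (r ◃ s)) ≠ s` for some `r ∈ R`, `s ∈ S`. -/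
def RackTypeD (X : Type*) [Rack X] : Prop :=
  ∃ R S : Set X, IsSubrack R ∧ IsSubrack S ∧ Disjoint R S ∧
    (∀ r ∈ R, ∀ s ∈ S, r ◃ s ∈ S) ∧ (∀ s ∈ S, ∀ r ∈ R, s ◃ r ∈ R) ∧
    ∃ r ∈ R, ∃ s ∈ S, r ◃ (s ◃ (r ◃ s)) ≠ s

namespace ShelfHom

variable {S₁ S₂ : Type*}

theorem preimage_act_mem [Shelf S₁] [Shelf S₂] (f : S₁ →◃ S₂) {A B C : Set S₂}
    (h : ∀ a ∈ A, ∀ b ∈ B, a ◃ b ∈ C) : ∀ a ∈ f ⁻¹' A, ∀ b ∈ f ⁻¹' B, a ◃ b ∈ f ⁻¹' C :=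
  fun a ha b hb => by simpa only [Set.mem_preimage, map_act] using h _ ha _ hb

theorem map_invAct [Rack S₁] [Rack S₂] (f : S₁ →◃ S₂) (x y : S₁) :
    f (x ◃⁻¹ y) = f x ◃⁻¹ f y := by
  rw [← Rack.left_cancel (f x), ← map_act, Rack.act_invAct_eq, Rack.act_invAct_eq]

theorem preimage_invAct_mem [Rack S₁] [Rack S₂] (f : S₁ →◃ S₂) {A B C : Set S₂}
    (h : ∀ a ∈ A, ∀ b ∈ B, a ◃⁻¹ b ∈ C) : ∀ a ∈ f ⁻¹' A, ∀ b ∈ f ⁻¹' B, a ◃⁻¹ b ∈ f ⁻¹' C :=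
  fun a ha b hb => by simpa only [Set.mem_preimage, map_invAct] using h _ ha _ hb

end ShelfHom

theorem IsSubrack.preimage {R₁ R₂ : Type*} [Rack R₁] [Rack R₂] (f : R₁ →◃ R₂) {Y : Set R₂}
    (hY : IsSubrack Y) (hne : (f ⁻¹' Y).Nonempty) : IsSubrack (f ⁻¹' Y) :=
  ⟨hne, f.preimage_act_mem hY.2.1, f.preimage_invAct_mem hY.2.2⟩

theorem rackTypeD_of_surjective_general {Z X : Type*} [Rack Z] [Rack X]
    (p : Z → X) (hsurj : Function.Surjective p)
    (hmorph : ∀ a b : Z, p (a ◃ b) = p a ◃ p b)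
    (hD : RackTypeD X) : RackTypeD Z := by
  let f : Z →◃ X := ⟨p, hmorph _ _⟩
  obtain ⟨R, S, hR, hS, hdisj, hRS, hSR, r, hr, s, hs, hne⟩ := hD
  obtain ⟨r, rfl⟩ := hsurj r
  obtain ⟨s, rfl⟩ := hsurj s
  refine ⟨f ⁻¹' R, f ⁻¹' S, hR.preimage f ⟨r, hr⟩, hS.preimage f ⟨s, hs⟩, hdisj.preimage f,
    f.preimage_act_mem hRS, f.preimage_act_mem hSR, r, hr, s, hs, fun h => hne ?_⟩
  simpa only [hmorph] using congrArg p h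

/-- If `p : Z → X` is a surjective rack morphism between finite racks and
`X` is of type D, then `Z` is of type D. -/
theorem rackTypeD_of_surjective {Z X : Type*} [Rack Z] [Rack X]
    [Fintype Z] [Fintype X] (p : Z → X) (hsurj : Function.Surjective p)
    (hmorph : ∀ a b : Z, p (a ◃ b) = p a ◃ p b)
    (hD : RackTypeD X) : RackTypeD Z :=
  rackTypeD_of_surjective_general p hsurj hmorph hD
end

section
/- Let G = ℤ/p ⋊ ℤ/q be the nonabelian semidirect product where q divides p − 1 and p, q are primes with q odd, ℤ/q acting faithfully on ℤ/p. Then no conjugacy class of G is of type D. In particular, every pair of elements r, s of G of order p satisfies (rs)² = (sr)² or r and s are conjugate in ⟨r, s⟩. -/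
/- A subgroup of a group of order `pq` has order `1`, `p`, `q` or `pq`, and only
the last can contain two non-commuting elements; so two non-commuting conjugates `r`, `s`
generate the whole group and are conjugate in `⟨r, s⟩`, while commuting ones satisfy
`(rs)² = (sr)²`. Elements of order `p` of `ℤ/p ⋊ ℤ/q` map trivially to `ℤ/q`, so they lie in
the abelian normal subgroup `ℤ/p` and commute. -/

theorem Subgroup.closure_pair_eq_top_of_card_eq_mul {G : Type*} [Group G] [Finite G]
    {p q : ℕ} (hp : p.Prime) (hq : q.Prime) (hG : Nat.card G = p * q) {r s : G}
    (hrs : ¬Commute r s) : closure {r, s} = ⊤ := by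
  set H := closure ({r, s} : Set G)
  have not_cyclic : ¬IsCyclic H := fun _ ↦
    letI := IsCyclic.commGroup (α := H)
    hrs <| congrArg Subtype.val <|
      mul_comm (⟨r, subset_closure (by simp)⟩ : H) ⟨s, subset_closure (by simp)⟩
  have not_dvd_prime {ℓ : ℕ} (hℓ : ℓ.Prime) : ¬Nat.card H ∣ ℓ := fun h ↦
    have : Fact ℓ.Prime := ⟨hℓ⟩
    not_cyclic (isCyclic_of_card_dvd_prime h)
  obtain ⟨a, b, ha, hb, hab⟩ := dvd_mul.mp (hG ▸ H.card_subgroup_dvd_card)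
  rcases (Nat.dvd_prime hp).mp ha with rfl | rfl
  · exact (not_dvd_prime hq (by rwa [hab, one_mul])).elim
  rcases (Nat.dvd_prime hq).mp hb with rfl | rfl
  · exact (not_dvd_prime hp (by rw [hab, mul_one])).elim
  exact H.eq_top_of_card_eq (hab.trans hG.symm)

theorem not_isTypeD_of_card_eq_mul {G : Type*} [Group G] [Finite G] {p q : ℕ}
    (hp : p.Prime) (hq : q.Prime) (hG : Nat.card G = p * q) (g : G) :
    ¬IsTypeD {x | IsConj g x} := by
  rintro ⟨r, hr, s, hs, hsq, hnconj⟩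
  have hrs : ¬Commute r s := fun h ↦ hsq (by rw [h.eq])
  obtain ⟨c, hc⟩ := isConj_iff.mp ((hr : IsConj g r).symm.trans hs)
  exact hnconj c (Subgroup.closure_pair_eq_top_of_card_eq_mul hp hq hG hrs ▸ Subgroup.mem_top c) hc

namespace SemidirectProduct

variable {N K : Type*} [Group N] [Group K] {φ : K →* MulAut N}

instance [Finite N] [Finite K] : Finite (N ⋊[φ] K) := .of_equiv _ equivProd.symm

theorem mem_range_inl_of_coprime {g : N ⋊[φ] K} (hg : (orderOf g).Coprime (Nat.card K)) :
    g ∈ (inl : N →* N ⋊[φ] K).range := by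
  rw [range_inl_eq_ker_rightHom, MonoidHom.mem_ker, ← orderOf_eq_one_iff]
  exact Nat.eq_one_of_dvd_coprimes hg (orderOf_map_dvd _ g) (orderOf_dvd_natCard _)

theorem commute_of_coprime [IsMulCommutative N] {r s : N ⋊[φ] K}
    (hr : (orderOf r).Coprime (Nat.card K)) (hs : (orderOf s).Coprime (Nat.card K)) :
    Commute r s := by
  obtain ⟨a, rfl⟩ := mem_range_inl_of_coprime hr
  obtain ⟨b, rfl⟩ := mem_range_inl_of_coprime hs
  exact (show Commute a b from Std.Commutative.comm a b).map inl

end SemidirectProduct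

theorem no_typeD_in_pq_group_general (p q : ℕ) (hp : p.Prime) (hq : q.Prime)
    (hdvd : q ∣ p - 1)
    (φ : Multiplicative (ZMod q) →* MulAut (Multiplicative (ZMod p))) :
    (∀ g : Multiplicative (ZMod p) ⋊[φ] Multiplicative (ZMod q),
      ¬ IsTypeD {x | IsConj g x}) ∧
    (∀ r s : Multiplicative (ZMod p) ⋊[φ] Multiplicative (ZMod q),
      orderOf r = p → orderOf s = p →
      (r * s) ^ 2 = (s * r) ^ 2 ∨
        ∃ h ∈ Subgroup.closure ({r, s} :
          Set (Multiplicative (ZMod p) ⋊[φ] Multiplicative (ZMod q))),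
          h * r * h⁻¹ = s) := by
  have : NeZero p := ⟨hp.ne_zero⟩
  have : NeZero q := ⟨hq.ne_zero⟩
  have hcard_q : Nat.card (Multiplicative (ZMod q)) = q := by simp
  have hcard : Nat.card (Multiplicative (ZMod p) ⋊[φ] Multiplicative (ZMod q)) = p * q := by
    simp [SemidirectProduct.card]
  have hpq : p.Coprime q := by
    have := Nat.le_of_dvd (Nat.sub_pos_of_lt hp.one_lt) hdvd
    have := hp.two_le
    exact (Nat.coprime_primes hp hq).mpr (by omega)
  refine ⟨not_isTypeD_of_card_eq_mul hp hq hcard, fun r s hr hs ↦ .inl ?_⟩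
  rw [(SemidirectProduct.commute_of_coprime (by rwa [hr, hcard_q])
    (by rwa [hs, hcard_q])).eq]

/-- In the nonabelian semidirect product `ℤ/p ⋊ ℤ/q` (`p`, `q` primes, `q`
odd, `q ∣ p − 1`, faithful action), no conjugacy class is of type D; in
particular any two elements `r`, `s` of order `p` satisfy `(rs)² = (sr)²`
or are conjugate in `⟨r, s⟩`. -/
theorem no_typeD_in_pq_group (p q : ℕ) (hp : p.Prime) (hq : q.Prime)
    (hodd : Odd q) (hdvd : q ∣ p - 1)
    (φ : Multiplicative (ZMod q) →* MulAut (Multiplicative (ZMod p)))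
    (hφ : Function.Injective φ) :
    (∀ g : Multiplicative (ZMod p) ⋊[φ] Multiplicative (ZMod q),
      ¬ IsTypeD {x | IsConj g x}) ∧
    (∀ r s : Multiplicative (ZMod p) ⋊[φ] Multiplicative (ZMod q),
      orderOf r = p → orderOf s = p →
      (r * s) ^ 2 = (s * r) ^ 2 ∨
        ∃ h ∈ Subgroup.closure ({r, s} :
          Set (Multiplicative (ZMod p) ⋊[φ] Multiplicative (ZMod q))),
          h * r * h⁻¹ = s) :=
  no_typeD_in_pq_group_general p q hp hq hdvd φ
end
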